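/- arXiv:1010.5028 — 2 statements merged into one kernel-verified Lean document; each statement's English description precedes it below -/
import Mathlib

section
/- Let 0 < ϑ < 1 and r > ϑ. Define f(q) = min{q, ϑ + (√q − √r)²} for 0 < q < r. Then f is maximized over q ∈ (0, r) at q = (ϑ + r)²/(4r), with maximum value (ϑ + r)²/(4r). -/
open Real Set

/-!
The first branch `q` increases and the second branch `ϑ + (√q - √r)²` decreases on `(0, r)`,
so their minimum is largest where they cross. Writing `q = t²`, the crossing equation
`t² = ϑ + (t - √r)²` is linear in `t`, with root `t = (ϑ + r) / (2√r)`.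
-/

theorem isMaxOn_min_of_monotoneOn_of_antitoneOn {α β : Type*} [LinearOrder α] [LinearOrder β]
    {f g : α → β} {s : Set α} {x : α} (hf : MonotoneOn f s) (hg : AntitoneOn g s) (hx : x ∈ s)
    (hfg : f x = g x) : IsMaxOn (fun y => min (f y) (g y)) s x := by
  intro y hy
  show min (f y) (g y) ≤ min (f x) (g x)
  rw [← hfg, min_self]
  rcases le_total y x with hyx | hxy
  · exact (min_le_left _ _).trans (hf hy hx hyx)
  · exact (min_le_right _ _).trans (hfg ▸ hg hx hy hxy)

theorem antitoneOn_add_sq_sqrt_sub_sqrt (c r : ℝ) :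
    AntitoneOn (fun q => c + (√q - √r) ^ 2) (Iic r) := by
  intro a _ b hb hab
  have hb_r : √b ≤ √r := Real.sqrt_le_sqrt hb
  have ha_b : √a ≤ √b := Real.sqrt_le_sqrt hab
  dsimp only
  nlinarith

theorem sqrt_sq_add_div_four_mul {ϑ r : ℝ} (hr : 0 < r) (hϑr : 0 ≤ ϑ + r) :
    √((ϑ + r) ^ 2 / (4 * r)) = (ϑ + r) / (2 * √r) := by
  have hsq : (ϑ + r) ^ 2 / (4 * r) = ((ϑ + r) / (2 * √r)) ^ 2 := by
    rw [div_pow, mul_pow, Real.sq_sqrt hr.le]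
    ring
  rw [hsq, Real.sqrt_sq (by positivity)]

theorem add_sq_sqrt_sub_sqrt_of_crossing {ϑ r : ℝ} (hr : 0 < r) (hϑr : 0 ≤ ϑ + r) :
    ϑ + (√((ϑ + r) ^ 2 / (4 * r)) - √r) ^ 2 = (ϑ + r) ^ 2 / (4 * r) := by
  have hs : √r ^ 2 = r := Real.sq_sqrt hr.le
  have hs0 : √r ≠ 0 := (Real.sqrt_pos.2 hr).ne'
  rw [sqrt_sq_add_div_four_mul hr hϑr]
  field_simp
  rw [hs]
  ring

theorem sq_add_div_four_mul_mem_Ioo {ϑ r : ℝ} (hϑ : 0 < ϑ) (hϑr : ϑ < r) :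
    (ϑ + r) ^ 2 / (4 * r) ∈ Ioo 0 r := by
  have hr : 0 < r := hϑ.trans hϑr
  refine ⟨by positivity, ?_⟩
  rw [div_lt_iff₀ (by positivity)]
  nlinarith

theorem stmt0_general (ϑ r : ℝ) (hϑ0 : 0 < ϑ) (hr : ϑ < r) :
    (ϑ + r) ^ 2 / (4 * r) ∈ Set.Ioo (0 : ℝ) r ∧
    IsMaxOn (fun q : ℝ => min q (ϑ + (Real.sqrt q - Real.sqrt r) ^ 2))
      (Set.Ioo 0 r) ((ϑ + r) ^ 2 / (4 * r)) ∧
    min ((ϑ + r) ^ 2 / (4 * r))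
        (ϑ + (Real.sqrt ((ϑ + r) ^ 2 / (4 * r)) - Real.sqrt r) ^ 2)
      = (ϑ + r) ^ 2 / (4 * r) := by
  have hr0 : 0 < r := hϑ0.trans hr
  have hmem := sq_add_div_four_mul_mem_Ioo hϑ0 hr
  have hcross := add_sq_sqrt_sub_sqrt_of_crossing (ϑ := ϑ) hr0 (by linarith)
  refine ⟨hmem, ?_, by rw [hcross, min_self]⟩
  have hanti : AntitoneOn (fun q => ϑ + (√q - √r) ^ 2) (Ioo 0 r) :=
    (antitoneOn_add_sq_sqrt_sub_sqrt ϑ r).mono (Ioo_subset_Iio_self.trans Iio_subset_Iic_self)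
  exact isMaxOn_min_of_monotoneOn_of_antitoneOn monotoneOn_id hanti hmem hcross.symm

theorem stmt0 (ϑ r : ℝ) (hϑ0 : 0 < ϑ) (hϑ1 : ϑ < 1) (hr : ϑ < r) :
    (ϑ + r) ^ 2 / (4 * r) ∈ Set.Ioo (0 : ℝ) r ∧
    IsMaxOn (fun q : ℝ => min q (ϑ + (Real.sqrt q - Real.sqrt r) ^ 2))
      (Set.Ioo 0 r) ((ϑ + r) ^ 2 / (4 * r)) ∧
    min ((ϑ + r) ^ 2 / (4 * r))
        (ϑ + (Real.sqrt ((ϑ + r) ^ 2 / (4 * r)) - Real.sqrt r) ^ 2)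
      = (ϑ + r) ^ 2 / (4 * r) :=
  stmt0_general ϑ r hϑ0 hr
end

section
/- Fix a ∈ (−1/2, 1/2), λ > 0, T = [[1, a],[a, 1]], and y ∈ ℝ². The bivariate subset selection minimizer is (0,0) (i.e., (0,0) achieves the minimum of G over all of ℝ²) if and only if y₁² ≤ λ², y₂² ≤ λ², and yᵀT⁻¹y ≤ 2λ². -/
/-- Bivariate subset selection functional. -/
noncomputable def Gss (a lam y₁ y₂ : ℝ) (β : ℝ × ℝ) : ℝ :=
  (1 / 2) * β.1 ^ 2 + (1 / 2) * β.2 ^ 2 + a * β.1 * β.2 - (y₁ * β.1 + y₂ * β.2)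
    + (lam ^ 2 / 2) * ((if β.1 ≠ 0 then 1 else 0) + (if β.2 ≠ 0 then 1 else 0))

theorem stmt9 (a lam y₁ y₂ : ℝ) (ha : a ∈ Set.Ioo (-(1 / 2) : ℝ) (1 / 2))
    (hlam : 0 < lam) :
    (∀ β : ℝ × ℝ, Gss a lam y₁ y₂ (0, 0) ≤ Gss a lam y₁ y₂ β) ↔
      (y₁ ^ 2 ≤ lam ^ 2 ∧ y₂ ^ 2 ≤ lam ^ 2 ∧
        (y₁ ^ 2 + y₂ ^ 2 - 2 * a * y₁ * y₂) / (1 - a ^ 2) ≤ 2 * lam ^ 2) := by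
  obtain ⟨ha1, ha2⟩ := ha
  have hd : 0 < 1 - a ^ 2 := by nlinarith
  have G0 : Gss a lam y₁ y₂ (0, 0) = 0 := by simp [Gss]
  constructor
  · intro h
    refine ⟨?_, ?_, ?_⟩
    · have h1 := h (y₁, 0)
      rw [G0] at h1
      simp only [Gss] at h1
      have e1 : (if y₁ ≠ 0 then (1:ℝ) else 0) ≤ 1 := by split_ifs <;> norm_num
      simp only [ne_eq, not_true_eq_false, if_false] at h1
      nlinarith [h1, e1]
    · have h1 := h (0, y₂)
      rw [G0] at h1
      simp only [Gss] at h1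
      have e1 : (if y₂ ≠ 0 then (1:ℝ) else 0) ≤ 1 := by split_ifs <;> norm_num
      simp only [ne_eq, not_true_eq_false, if_false] at h1
      nlinarith [h1, e1]
    · have h3 := h ((y₁ - a * y₂) / (1 - a ^ 2), (y₂ - a * y₁) / (1 - a ^ 2))
      rw [G0] at h3
      simp only [Gss] at h3
      set c₁ := (y₁ - a * y₂) / (1 - a ^ 2) with hc₁
      set c₂ := (y₂ - a * y₁) / (1 - a ^ 2) with hc₂
      have e1 : (if c₁ ≠ 0 then (1:ℝ) else 0) ≤ 1 := by split_ifs <;> norm_num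
      have e2 : (if c₂ ≠ 0 then (1:ℝ) else 0) ≤ 1 := by split_ifs <;> norm_num
      have key : (1 / 2) * c₁ ^ 2 + (1 / 2) * c₂ ^ 2 + a * c₁ * c₂ - (y₁ * c₁ + y₂ * c₂)
          = -((y₁ ^ 2 + y₂ ^ 2 - 2 * a * y₁ * y₂) / (1 - a ^ 2)) / 2 := by
        rw [hc₁, hc₂]
        field_simp
        ring
      nlinarith [h3, e1, e2, key, sq_nonneg lam]
  · rintro ⟨h1, h2, h3⟩ ⟨b₁, b₂⟩
    rw [G0]
    simp only [Gss]
    have h3' : y₁ ^ 2 + y₂ ^ 2 - 2 * a * y₁ * y₂ ≤ 2 * lam ^ 2 * (1 - a ^ 2) := by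
      rw [div_le_iff₀ hd] at h3
      linarith
    rcases eq_or_ne b₁ 0 with hb1 | hb1 <;> rcases eq_or_ne b₂ 0 with hb2 | hb2
    · simp [hb1, hb2]
    · simp only [hb1, hb2, ne_eq, not_true_eq_false, if_false, not_false_eq_true, if_true]
      nlinarith [sq_nonneg (b₂ - y₂)]
    · simp only [hb1, hb2, ne_eq, not_true_eq_false, if_false, not_false_eq_true, if_true]
      nlinarith [sq_nonneg (b₁ - y₁)]
    · simp only [hb1, hb2, ne_eq, not_false_eq_true, if_true]
      have k1 : (0:ℝ) ≤ (1 + a) * (((1 - a ^ 2) * b₁ - (y₁ - a * y₂))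
          + ((1 - a ^ 2) * b₂ - (y₂ - a * y₁))) ^ 2 :=
        mul_nonneg (by linarith) (sq_nonneg _)
      have k2 : (0:ℝ) ≤ (1 - a) * (((1 - a ^ 2) * b₁ - (y₁ - a * y₂))
          - ((1 - a ^ 2) * b₂ - (y₂ - a * y₁))) ^ 2 :=
        mul_nonneg (by linarith) (sq_nonneg _)
      have h4 : (y₁ ^ 2 + y₂ ^ 2 - 2 * a * y₁ * y₂) * (1 - a ^ 2)
          ≤ 2 * lam ^ 2 * (1 - a ^ 2) * (1 - a ^ 2) :=
        mul_le_mul_of_nonneg_right h3' hd.le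
      have main : 0 ≤ 2 * (1 - a ^ 2) ^ 2 *
          (1 / 2 * b₁ ^ 2 + 1 / 2 * b₂ ^ 2 + a * b₁ * b₂ - (y₁ * b₁ + y₂ * b₂)
            + lam ^ 2 / 2 * (1 + 1)) := by linarith [k1, k2, h4]
      have hdd : 0 < 2 * (1 - a ^ 2) ^ 2 := by positivity
      exact (mul_nonneg_iff_of_pos_left hdd).mp main
end
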